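/- Let ζ > 0 and T > 0, and let w be a classical zero-input solution of the micro-beam system on [0,1] × [0,T] with total energy E(t) = K(t) + U(t). Then 2 E(0) T ≤ ∫₀ᵀ ∫₀¹ ((∂w/∂t)² + 3 (∂²w/∂x²)² + 5ζ (∂³w/∂x³)²) dx dt ≤ 10 E(0) T. -/

import Mathlib

/-!
The energy `E = K + U` is conserved. Its time derivative cannot be computed directly, since a
classical solution comes with no mixed derivatives. Instead, integrating by parts in `x` and
using the boundary conditions gives, for any two times `s, σ`,
`U(σ) - U(s) = ½ ∫₀¹ (w(σ) - w(s)) (A(σ) + A(s)) dx` with `A = ∂⁴ₓw - ζ ∂⁶ₓw = -∂²ₜw`.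
Dividing by `σ - s` and letting `σ → s` (dominated convergence in `x`) gives
`U' = -∫₀¹ ∂ₜw ∂²ₜw dx = -K'`. With `E` constant, the integrand of the double integral lies
pointwise in `t` between `2E` and `10E`.
-/

open Set MeasureTheory intervalIntegral

/-- `wxD w m x t` is the `m`-th spatial derivative of `w` on `[0,1]`. -/
noncomputable def wxD (w : ℝ → ℝ → ℝ) (m : ℕ) (x t : ℝ) : ℝ :=
  iteratedDerivWithin m (fun x' => w x' t) (Icc (0:ℝ) 1) x

/-- `wtD w T k x t` is the `k`-th time derivative of `w` on `[0,T]`. -/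
noncomputable def wtD (w : ℝ → ℝ → ℝ) (T : ℝ) (k : ℕ) (x t : ℝ) : ℝ :=
  iteratedDerivWithin k (fun t' => w x t') (Icc (0:ℝ) T) t

/-- A classical zero-input solution of the micro-beam system on `[0,1] × [0,T]`:
`C⁶` in `x`, `C²` in `t`, jointly continuous with all these partial derivatives,
satisfying the PDE and the boundary conditions. -/
def IsBeamSolution (ζ T : ℝ) (w : ℝ → ℝ → ℝ) : Prop :=
  (∀ t ∈ Icc (0:ℝ) T, ContDiffOn ℝ 6 (fun x => w x t) (Icc (0:ℝ) 1)) ∧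
  (∀ x ∈ Icc (0:ℝ) 1, ContDiffOn ℝ 2 (fun t => w x t) (Icc (0:ℝ) T)) ∧
  (∀ m : ℕ, m ≤ 6 →
    ContinuousOn (fun p : ℝ × ℝ => wxD w m p.1 p.2) (Icc (0:ℝ) 1 ×ˢ Icc (0:ℝ) T)) ∧
  (∀ k : ℕ, k ≤ 2 →
    ContinuousOn (fun p : ℝ × ℝ => wtD w T k p.1 p.2) (Icc (0:ℝ) 1 ×ˢ Icc (0:ℝ) T)) ∧
  (∀ x ∈ Icc (0:ℝ) 1, ∀ t ∈ Icc (0:ℝ) T,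
    wxD w 4 x t - ζ * wxD w 6 x t + wtD w T 2 x t = 0) ∧
  (∀ t ∈ Icc (0:ℝ) T,
    w 0 t = 0 ∧ wxD w 1 0 t = 0 ∧ wxD w 2 0 t = 0 ∧
    ζ * wxD w 5 1 t - wxD w 3 1 t = 0 ∧
    wxD w 2 1 t - ζ * wxD w 4 1 t = 0 ∧
    ζ * wxD w 3 1 t = 0)

/-- Kinetic energy. -/
noncomputable def kinE (w : ℝ → ℝ → ℝ) (T t : ℝ) : ℝ :=
  (1/2) * ∫ x in (0:ℝ)..1, (wtD w T 1 x t)^2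

/-- Strain energy. -/
noncomputable def strE (ζ : ℝ) (w : ℝ → ℝ → ℝ) (t : ℝ) : ℝ :=
  (1/2) * ∫ x in (0:ℝ)..1, ((wxD w 2 x t)^2 + ζ * (wxD w 3 x t)^2)

/-- Total energy. -/
noncomputable def totE (ζ : ℝ) (w : ℝ → ℝ → ℝ) (T t : ℝ) : ℝ :=
  kinE w T t + strE ζ w t

open Filter Topology

theorem continuousOn_intervalIntegral_of_continuousOn_prod {F : ℝ → ℝ → ℝ} {a b : ℝ} {S : Set ℝ}
    (hab : a ≤ b) (hS : IsCompact S)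
    (hF : ContinuousOn (fun p : ℝ × ℝ => F p.1 p.2) (Icc a b ×ˢ S)) :
    ContinuousOn (fun t => ∫ x in a..b, F x t) S := by
  have hI : uIoc a b ⊆ Icc a b := uIoc_of_le hab ▸ Ioc_subset_Icc_self
  obtain ⟨C, hC⟩ := (isCompact_Icc.prod hS).exists_bound_of_continuousOn hF
  intro t ht
  refine continuousWithinAt_of_dominated_interval (bound := fun _ => C) ?_ ?_
    intervalIntegrable_const ?_
  · filter_upwards [self_mem_nhdsWithin] with s hs
    exact ((ContinuousOn.uncurry_right (f := F) s hs hF).mono hI).aestronglyMeasurable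
      measurableSet_uIoc
  · filter_upwards [self_mem_nhdsWithin] with s hs
    exact ae_of_all _ fun x hx => hC (x, s) ⟨hI hx, hs⟩
  · exact ae_of_all _ fun x hx => ContinuousOn.uncurry_left (f := F) x (hI hx) hF t ht

theorem hasDerivWithinAt_of_slope_eq_integral {f : ℝ → ℝ} {G : ℝ → ℝ → ℝ} {g : ℝ → ℝ}
    {S : Set ℝ} {s a b C : ℝ} (hab : a ≤ b)
    (hslope : ∀ σ ∈ S \ {s}, slope f s σ = ∫ x in a..b, G σ x)
    (hcont : ∀ σ ∈ S \ {s}, ContinuousOn (G σ) (Icc a b))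
    (hbound : ∀ σ ∈ S \ {s}, ∀ x ∈ Icc a b, |G σ x| ≤ C)
    (hlim : ∀ x ∈ Icc a b, Tendsto (fun σ => G σ x) (𝓝[S \ {s}] s) (𝓝 (g x))) :
    HasDerivWithinAt f (∫ x in a..b, g x) S s := by
  have hI : uIoc a b ⊆ Icc a b := uIoc_of_le hab ▸ Ioc_subset_Icc_self
  rw [hasDerivWithinAt_iff_tendsto_slope]
  refine (tendsto_integral_filter_of_dominated_convergence (F := G) (fun _ => C) ?_ ?_
    intervalIntegrable_const ?_).congr' ?_
  · filter_upwards [self_mem_nhdsWithin] with σ hσ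
    exact ((hcont σ hσ).mono hI).aestronglyMeasurable measurableSet_uIoc
  · filter_upwards [self_mem_nhdsWithin] with σ hσ
    exact ae_of_all _ fun x hx => hbound σ hσ x (hI hx)
  · exact ae_of_all _ fun x hx => hlim x (hI hx)
  · filter_upwards [self_mem_nhdsWithin] with σ hσ
    exact (hslope σ hσ).symm

theorem abs_slope_le_of_hasDerivWithinAt {f f' : ℝ → ℝ} {S : Set ℝ} {C : ℝ} (hS : Convex ℝ S)
    (hf : ∀ x ∈ S, HasDerivWithinAt f (f' x) S x) (hC : ∀ x ∈ S, |f' x| ≤ C)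
    {x y : ℝ} (hx : x ∈ S) (hy : y ∈ S) : |slope f x y| ≤ C := by
  rcases eq_or_ne y x with rfl | hyx
  · rw [slope_same, abs_zero]
    exact (abs_nonneg _).trans (hC y hx)
  · rw [slope_def_field, abs_div, div_le_iff₀ (abs_pos.2 (sub_ne_zero.2 hyx))]
    exact hS.norm_image_sub_le_of_norm_hasDerivWithin_le hf hC hx hy

theorem ContDiffOn.hasDerivWithinAt_iteratedDerivWithin {𝕜 F : Type*}
    [NontriviallyNormedField 𝕜] [NormedAddCommGroup F] [NormedSpace 𝕜 F] {f : 𝕜 → F} {s : Set 𝕜}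
    {n : WithTop ℕ∞} (hf : ContDiffOn 𝕜 n f s) (hs : UniqueDiffOn 𝕜 s) {m : ℕ} (hm : m < n)
    {x : 𝕜} (hx : x ∈ s) :
    HasDerivWithinAt (iteratedDerivWithin m f s) (iteratedDerivWithin (m + 1) f s x) s x := by
  rw [iteratedDerivWithin_succ]
  exact (hf.differentiableOn_iteratedDerivWithin hm hs x hx).hasDerivWithinAt

theorem continuousOn_of_hasDerivWithinAt_succ {F : ℕ → ℝ → ℝ} {s : Set ℝ} {n : ℕ}
    (hF : ∀ k < n, ∀ x ∈ s, HasDerivWithinAt (F k) (F (k + 1) x) s x)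
    (hn : ContinuousOn (F n) s) {k : ℕ} (hk : k ≤ n) : ContinuousOn (F k) s := by
  rcases hk.lt_or_eq with hk | rfl
  · exact fun x hx => (hF k hk x hx).continuousWithinAt
  · exact hn

theorem integral_mul_beamOperator {ζ a b : ℝ} (hab : a ≤ b) {F V : ℕ → ℝ → ℝ}
    (hF : ∀ k < 3, ∀ x ∈ Icc a b, HasDerivWithinAt (F k) (F (k + 1) x) (Icc a b) x)
    (hV : ∀ k < 6, ∀ x ∈ Icc a b, HasDerivWithinAt (V k) (V (k + 1) x) (Icc a b) x)
    (hF₃ : ContinuousOn (F 3) (Icc a b)) (hV₆ : ContinuousOn (V 6) (Icc a b))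
    (hFa : F 0 a = 0 ∧ F 1 a = 0 ∧ F 2 a = 0)
    (hVb : ζ * V 5 b - V 3 b = 0 ∧ V 2 b - ζ * V 4 b = 0 ∧ ζ * V 3 b = 0) :
    ∫ x in a..b, F 0 x * (V 4 x - ζ * V 6 x)
      = ∫ x in a..b, (F 2 x * V 2 x + ζ * (F 3 x * V 3 x)) := by
  have hint : ∀ i ≤ 3, ∀ j ≤ 6, IntervalIntegrable (fun x => F i x * V j x) volume a b :=
    fun i hi j hj => ((continuousOn_of_hasDerivWithinAt_succ hF hF₃ hi).mul
      (continuousOn_of_hasDerivWithinAt_succ hV hV₆ hj)).intervalIntegrable_of_Icc hab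
  have ibp : ∀ i < 3, ∀ j < 6, ∫ x in a..b, F i x * V (j + 1) x
      = F i b * V j b - F i a * V j a - ∫ x in a..b, F (i + 1) x * V j x := by
    intro i hi j hj
    rw [← uIcc_of_le hab] at hF hV hF₃ hV₆
    exact integral_mul_deriv_eq_deriv_mul_of_hasDerivWithinAt (hF i hi) (hV j hj)
      ((continuousOn_of_hasDerivWithinAt_succ hF hF₃ hi).intervalIntegrable)
      ((continuousOn_of_hasDerivWithinAt_succ hV hV₆ hj).intervalIntegrable)
  have e1 := ibp 0 (by norm_num) 3 (by norm_num)
  have e2 := ibp 1 (by norm_num) 2 (by norm_num)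
  have e3 := ibp 0 (by norm_num) 5 (by norm_num)
  have e4 := ibp 1 (by norm_num) 4 (by norm_num)
  have e5 := ibp 2 (by norm_num) 3 (by norm_num)
  obtain ⟨h0, h1, h2⟩ := hFa
  have hsplit : ∫ x in a..b, F 0 x * (V 4 x - ζ * V 6 x)
      = (∫ x in a..b, F 0 x * V 4 x) - ζ * ∫ x in a..b, F 0 x * V 6 x := by
    rw [← intervalIntegral.integral_const_mul,
      ← integral_sub (hint 0 (by norm_num) 4 (by norm_num))
        ((hint 0 (by norm_num) 6 le_rfl).const_mul ζ)]
    exact integral_congr fun x _ => by ring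
  rw [hsplit, integral_add (hint 2 (by norm_num) 2 (by norm_num))
    ((hint 3 le_rfl 3 (by norm_num)).const_mul ζ), intervalIntegral.integral_const_mul]
  simp only [Nat.reduceAdd, h0, h1, h2, zero_mul, sub_zero] at e1 e2 e3 e4 e5
  linear_combination e1 - e2 - ζ * e3 + ζ * e4 - ζ * e5
    - F 0 b * hVb.1 - F 1 b * hVb.2.1 - F 2 b * hVb.2.2

namespace IsBeamSolution

variable {ζ T : ℝ} {w : ℝ → ℝ → ℝ}

theorem continuousOn_wxD (hw : IsBeamSolution ζ T w) {m : ℕ} (hm : m ≤ 6) {t : ℝ}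
    (ht : t ∈ Icc 0 T) : ContinuousOn (fun x => wxD w m x t) (Icc 0 1) :=
  ContinuousOn.uncurry_right (f := wxD w m) t ht (hw.2.2.1 m hm)

theorem continuousOn_wtD (hw : IsBeamSolution ζ T w) {k : ℕ} (hk : k ≤ 2) {t : ℝ}
    (ht : t ∈ Icc 0 T) : ContinuousOn (fun x => wtD w T k x t) (Icc 0 1) :=
  ContinuousOn.uncurry_right (f := wtD w T k) t ht (hw.2.2.2.1 k hk)

theorem continuousOn_wtD_time (hw : IsBeamSolution ζ T w) {k : ℕ} (hk : k ≤ 2) {x : ℝ}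
    (hx : x ∈ Icc 0 1) : ContinuousOn (wtD w T k x) (Icc 0 T) :=
  ContinuousOn.uncurry_left (f := wtD w T k) x hx (hw.2.2.2.1 k hk)

theorem exists_bound_wtD (hw : IsBeamSolution ζ T w) {k : ℕ} (hk : k ≤ 2) :
    ∃ M, ∀ x ∈ Icc (0 : ℝ) 1, ∀ t ∈ Icc 0 T, |wtD w T k x t| ≤ M := by
  obtain ⟨M, hM⟩ :=
    (isCompact_Icc.prod isCompact_Icc).exists_bound_of_continuousOn (hw.2.2.2.1 k hk)
  exact ⟨M, fun x hx t ht => hM (x, t) ⟨hx, ht⟩⟩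

theorem hasDerivWithinAt_wxD (hw : IsBeamSolution ζ T w) {m : ℕ} (hm : m < 6) {t : ℝ}
    (ht : t ∈ Icc 0 T) {x : ℝ} (hx : x ∈ Icc (0 : ℝ) 1) :
    HasDerivWithinAt (fun x => wxD w m x t) (wxD w (m + 1) x t) (Icc 0 1) x :=
  (hw.1 t ht).hasDerivWithinAt_iteratedDerivWithin (uniqueDiffOn_Icc one_pos)
    (by exact_mod_cast hm) hx

theorem hasDerivWithinAt_wtD (hT : 0 < T) (hw : IsBeamSolution ζ T w) {k : ℕ} (hk : k < 2)
    {x : ℝ} (hx : x ∈ Icc (0 : ℝ) 1) {t : ℝ} (ht : t ∈ Icc 0 T) :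
    HasDerivWithinAt (wtD w T k x) (wtD w T (k + 1) x t) (Icc 0 T) t :=
  (hw.2.1 x hx).hasDerivWithinAt_iteratedDerivWithin (uniqueDiffOn_Icc hT)
    (by exact_mod_cast hk) ht

theorem hasDerivWithinAt_time (hT : 0 < T) (hw : IsBeamSolution ζ T w) {x : ℝ}
    (hx : x ∈ Icc (0 : ℝ) 1) {t : ℝ} (ht : t ∈ Icc 0 T) :
    HasDerivWithinAt (w x) (wtD w T 1 x t) (Icc 0 T) t := by
  have h := hw.hasDerivWithinAt_wtD hT (k := 0) (by norm_num) hx ht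
  rwa [show wtD w T 0 x = w x from funext fun _ => by simp [wtD]] at h

theorem strE_sub_strE (hw : IsBeamSolution ζ T w) {s σ : ℝ} (hs : s ∈ Icc 0 T)
    (hσ : σ ∈ Icc 0 T) :
    strE ζ w σ - strE ζ w s
      = 1 / 2 * ∫ x in (0 : ℝ)..1, (w x σ - w x s) * -(wtD w T 2 x σ + wtD w T 2 x s) := by
  have hw₀ : ∀ x t, wxD w 0 x t = w x t := fun x t => by simp [wxD]
  obtain ⟨σ₀, σ₁, σ₂, σ₅, σ₄, σ₃⟩ := hw.2.2.2.2.2 σ hσ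
  obtain ⟨s₀, s₁, s₂, s₅, s₄, s₃⟩ := hw.2.2.2.2.2 s hs
  have key := integral_mul_beamOperator zero_le_one (ζ := ζ)
    (F := fun k x => wxD w k x σ - wxD w k x s) (V := fun k x => wxD w k x σ + wxD w k x s)
    (fun k hk x hx => (hw.hasDerivWithinAt_wxD (by omega) hσ hx).sub
      (hw.hasDerivWithinAt_wxD (by omega) hs hx))
    (fun k hk x hx => (hw.hasDerivWithinAt_wxD hk hσ hx).add
      (hw.hasDerivWithinAt_wxD hk hs hx))
    ((hw.continuousOn_wxD (by norm_num) hσ).sub (hw.continuousOn_wxD (by norm_num) hs))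
    ((hw.continuousOn_wxD le_rfl hσ).add (hw.continuousOn_wxD le_rfl hs))
    ⟨by simp only [hw₀, σ₀, s₀, sub_zero], by simp only [σ₁, s₁, sub_zero],
      by simp only [σ₂, s₂, sub_zero]⟩
    ⟨by linear_combination σ₅ + s₅, by linear_combination σ₄ + s₄,
      by linear_combination σ₃ + s₃⟩
  have hint : ∀ t ∈ Icc 0 T, IntervalIntegrable
      (fun x => (wxD w 2 x t)^2 + ζ * (wxD w 3 x t)^2) volume 0 1 := fun t ht =>
    (((hw.continuousOn_wxD (by norm_num) ht).pow 2).add (continuousOn_const.mul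
      ((hw.continuousOn_wxD (by norm_num) ht).pow 2))).intervalIntegrable_of_Icc zero_le_one
  unfold strE
  rw [← mul_sub, ← integral_sub (hint σ hσ) (hint s hs)]
  congr 1
  calc _ = ∫ x in (0 : ℝ)..1, ((wxD w 2 x σ - wxD w 2 x s) * (wxD w 2 x σ + wxD w 2 x s)
          + ζ * ((wxD w 3 x σ - wxD w 3 x s) * (wxD w 3 x σ + wxD w 3 x s))) :=
        integral_congr fun x _ => by ring
    _ = _ := key.symm
    _ = _ := by
      refine integral_congr fun x hx => ?_
      rw [uIcc_of_le zero_le_one] at hx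
      have pσ := hw.2.2.2.2.1 x hx σ hσ
      have ps := hw.2.2.2.2.1 x hx s hs
      simp only [hw₀]
      linear_combination (w x σ - w x s) * (pσ + ps)

theorem hasDerivWithinAt_kinE (hT : 0 < T) (hw : IsBeamSolution ζ T w) {s : ℝ}
    (hs : s ∈ Icc 0 T) :
    HasDerivWithinAt (kinE w T) (∫ x in (0 : ℝ)..1, wtD w T 1 x s * wtD w T 2 x s)
      (Icc 0 T) s := by
  obtain ⟨M₁, hM₁⟩ := hw.exists_bound_wtD (k := 1) (by norm_num)
  obtain ⟨M₂, hM₂⟩ := hw.exists_bound_wtD (k := 2) le_rfl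
  have hderiv : ∀ x ∈ Icc (0 : ℝ) 1, ∀ t ∈ Icc 0 T, HasDerivWithinAt
      (fun t => 1 / 2 * wtD w T 1 x t ^ 2) (wtD w T 1 x t * wtD w T 2 x t) (Icc 0 T) t :=
    fun x hx t ht => (((hw.hasDerivWithinAt_wtD hT (k := 1) (by norm_num) hx ht).pow 2).const_mul
      (1 / 2)).congr_deriv (by norm_num; ring)
  have hint : ∀ t ∈ Icc 0 T, IntervalIntegrable (fun x => wtD w T 1 x t ^ 2) volume 0 1 :=
    fun t ht => ((hw.continuousOn_wtD (by norm_num) ht).pow 2).intervalIntegrable_of_Icc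
      zero_le_one
  refine hasDerivWithinAt_of_slope_eq_integral (C := M₁ * M₂)
    (G := fun σ x => slope (fun t => 1 / 2 * wtD w T 1 x t ^ 2) s σ) zero_le_one ?_ ?_ ?_ ?_
  · intro σ hσ
    simp only [slope_def_field, kinE]
    rw [intervalIntegral.integral_div,
      integral_sub ((hint σ hσ.1).const_mul _) ((hint s hs).const_mul _),
      intervalIntegral.integral_const_mul, intervalIntegral.integral_const_mul]
  · intro σ hσ
    simp only [slope_def_field]
    exact ((continuousOn_const.mul ((hw.continuousOn_wtD (by norm_num) hσ.1).pow 2)).sub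
      (continuousOn_const.mul ((hw.continuousOn_wtD (by norm_num) hs).pow 2))).div_const _
  · intro σ hσ x hx
    refine abs_slope_le_of_hasDerivWithinAt (convex_Icc 0 T) (hderiv x hx) (fun t ht => ?_)
      hs hσ.1
    rw [abs_mul]
    exact mul_le_mul (hM₁ x hx t ht) (hM₂ x hx t ht) (abs_nonneg _)
      ((abs_nonneg _).trans (hM₁ x hx t ht))
  · exact fun x hx => hasDerivWithinAt_iff_tendsto_slope.1 (hderiv x hx s hs)

theorem hasDerivWithinAt_strE (hT : 0 < T) (hw : IsBeamSolution ζ T w) {s : ℝ}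
    (hs : s ∈ Icc 0 T) :
    HasDerivWithinAt (strE ζ w) (-∫ x in (0 : ℝ)..1, wtD w T 1 x s * wtD w T 2 x s)
      (Icc 0 T) s := by
  obtain ⟨M₁, hM₁⟩ := hw.exists_bound_wtD (k := 1) (by norm_num)
  obtain ⟨M₂, hM₂⟩ := hw.exists_bound_wtD (k := 2) le_rfl
  rw [← intervalIntegral.integral_neg]
  refine hasDerivWithinAt_of_slope_eq_integral (C := M₁ * M₂)
    (G := fun σ x => 1 / 2 * slope (w x) s σ * -(wtD w T 2 x σ + wtD w T 2 x s))
    zero_le_one ?_ ?_ ?_ ?_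
  · intro σ hσ
    rw [slope_def_field, hw.strE_sub_strE hs hσ.1, ← intervalIntegral.integral_const_mul,
      ← intervalIntegral.integral_div]
    refine integral_congr fun x _ => ?_
    simp only [slope_def_field]
    ring
  · intro σ hσ
    simp only [slope_def_field]
    exact (continuousOn_const.mul (((hw.1 σ hσ.1).continuousOn.sub
      (hw.1 s hs).continuousOn).div_const _)).mul
      ((hw.continuousOn_wtD le_rfl hσ.1).add (hw.continuousOn_wtD le_rfl hs)).neg
  · intro σ hσ x hx
    have hslope := abs_slope_le_of_hasDerivWithinAt (convex_Icc 0 T)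
      (fun t ht => hw.hasDerivWithinAt_time hT hx ht) (fun t ht => hM₁ x hx t ht) hs hσ.1
    have hsum : |-(wtD w T 2 x σ + wtD w T 2 x s)| ≤ 2 * M₂ := by
      rw [abs_neg]
      linarith [abs_add_le (wtD w T 2 x σ) (wtD w T 2 x s), hM₂ x hx σ hσ.1, hM₂ x hx s hs]
    rw [abs_mul, abs_mul, abs_of_pos (by norm_num : (0 : ℝ) < 1 / 2)]
    linarith [mul_le_mul hslope hsum (abs_nonneg _) ((abs_nonneg _).trans hslope)]
  · intro x hx
    have hslope := hasDerivWithinAt_iff_tendsto_slope.1 (hw.hasDerivWithinAt_time hT hx hs)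
    have hcont : Tendsto (wtD w T 2 x) (𝓝[Icc 0 T \ {s}] s) (𝓝 (wtD w T 2 x s)) :=
      (hw.continuousOn_wtD_time le_rfl hx s hs).mono_left (nhdsWithin_mono _ sdiff_subset)
    convert (tendsto_const_nhds.mul hslope).mul ((hcont.add tendsto_const_nhds).neg) using 2
    ring

theorem hasDerivWithinAt_totE (hT : 0 < T) (hw : IsBeamSolution ζ T w) {s : ℝ}
    (hs : s ∈ Icc 0 T) : HasDerivWithinAt (totE ζ w T) 0 (Icc 0 T) s := by
  have h := (hw.hasDerivWithinAt_kinE hT hs).add (hw.hasDerivWithinAt_strE hT hs)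
  rwa [add_neg_cancel] at h

theorem totE_eq_totE_zero (hT : 0 < T) (hw : IsBeamSolution ζ T w) {t : ℝ}
    (ht : t ∈ Icc 0 T) : totE ζ w T t = totE ζ w T 0 :=
  constant_of_has_deriv_right_zero
    (fun _ hs => (hw.hasDerivWithinAt_totE hT hs).continuousWithinAt)
    (fun _ hs => (hw.hasDerivWithinAt_totE hT (Ico_subset_Icc_self hs)).mono_of_mem_nhdsWithin
      (mem_of_superset (Icc_mem_nhdsGE hs.2) (Icc_subset_Icc_left hs.1))) t ht

theorem integral_energyDensity_bounds (hζ : 0 ≤ ζ) (hw : IsBeamSolution ζ T w) {t : ℝ}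
    (ht : t ∈ Icc 0 T) :
    2 * totE ζ w T t ≤ ∫ x in (0:ℝ)..1,
        ((wtD w T 1 x t)^2 + 3 * (wxD w 2 x t)^2 + 5 * ζ * (wxD w 3 x t)^2) ∧
      ∫ x in (0:ℝ)..1, ((wtD w T 1 x t)^2 + 3 * (wxD w 2 x t)^2 + 5 * ζ * (wxD w 3 x t)^2)
        ≤ 10 * totE ζ w T t := by
  have hsq : ∀ f : ℝ → ℝ, ContinuousOn f (Icc 0 1) →
      IntervalIntegrable (fun x => f x ^ 2) volume 0 1 :=
    fun f hf => (hf.pow 2).intervalIntegrable_of_Icc zero_le_one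
  have i₁ := hsq _ (hw.continuousOn_wtD (k := 1) (by norm_num) ht)
  have i₂ := hsq _ (hw.continuousOn_wxD (m := 2) (by norm_num) ht)
  have i₃ := hsq _ (hw.continuousOn_wxD (m := 3) (by norm_num) ht)
  have hI : ∫ x in (0:ℝ)..1,
      ((wtD w T 1 x t)^2 + 3 * (wxD w 2 x t)^2 + 5 * ζ * (wxD w 3 x t)^2)
      = (∫ x in (0:ℝ)..1, (wtD w T 1 x t)^2) + 3 * (∫ x in (0:ℝ)..1, (wxD w 2 x t)^2)
        + 5 * ζ * ∫ x in (0:ℝ)..1, (wxD w 3 x t)^2 := by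
    rw [integral_add (i₁.add (i₂.const_mul 3)) (i₃.const_mul _),
      integral_add i₁ (i₂.const_mul 3), intervalIntegral.integral_const_mul,
      intervalIntegral.integral_const_mul]
  have hE : 2 * totE ζ w T t
      = (∫ x in (0:ℝ)..1, (wtD w T 1 x t)^2) + (∫ x in (0:ℝ)..1, (wxD w 2 x t)^2)
        + ζ * ∫ x in (0:ℝ)..1, (wxD w 3 x t)^2 := by
    simp only [totE, kinE, strE]
    rw [integral_add i₂ (i₃.const_mul ζ), intervalIntegral.integral_const_mul]
    ring
  have h₁ : 0 ≤ ∫ x in (0:ℝ)..1, (wtD w T 1 x t)^2 :=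
    intervalIntegral.integral_nonneg zero_le_one fun _ _ => sq_nonneg _
  have h₂ : 0 ≤ ∫ x in (0:ℝ)..1, (wxD w 2 x t)^2 :=
    intervalIntegral.integral_nonneg zero_le_one fun _ _ => sq_nonneg _
  have h₃ : 0 ≤ ζ * ∫ x in (0:ℝ)..1, (wxD w 3 x t)^2 :=
    mul_nonneg hζ (intervalIntegral.integral_nonneg zero_le_one fun _ _ => sq_nonneg _)
  rw [hI]
  constructor <;> linarith

end IsBeamSolution

/-- Two-sided energy bound for the double integral appearing in the multiplier
identity. -/
theorem stmt_18 (ζ T : ℝ) (hζ : 0 < ζ) (hT : 0 < T)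
    (w : ℝ → ℝ → ℝ) (hw : IsBeamSolution ζ T w) :
    2 * totE ζ w T 0 * T
      ≤ (∫ t in (0:ℝ)..T, ∫ x in (0:ℝ)..1,
          ((wtD w T 1 x t)^2 + 3 * (wxD w 2 x t)^2 + 5 * ζ * (wxD w 3 x t)^2)) ∧
    (∫ t in (0:ℝ)..T, ∫ x in (0:ℝ)..1,
        ((wtD w T 1 x t)^2 + 3 * (wxD w 2 x t)^2 + 5 * ζ * (wxD w 3 x t)^2))
      ≤ 10 * totE ζ w T 0 * T := by
  set I : ℝ → ℝ := fun t => ∫ x in (0:ℝ)..1,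
    ((wtD w T 1 x t)^2 + 3 * (wxD w 2 x t)^2 + 5 * ζ * (wxD w 3 x t)^2)
  have hbounds : ∀ t ∈ Icc 0 T, 2 * totE ζ w T 0 ≤ I t ∧ I t ≤ 10 * totE ζ w T 0 := by
    intro t ht
    rw [← hw.totE_eq_totE_zero hT ht]
    exact hw.integral_energyDensity_bounds hζ.le ht
  have hint : IntervalIntegrable I volume 0 T :=
    (continuousOn_intervalIntegral_of_continuousOn_prod zero_le_one isCompact_Icc
      ((((hw.2.2.2.1 1 (by norm_num)).pow 2).add
        (continuousOn_const.mul ((hw.2.2.1 2 (by norm_num)).pow 2))).add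
        (continuousOn_const.mul ((hw.2.2.1 3 (by norm_num)).pow 2)))).intervalIntegrable_of_Icc
      hT.le
  constructor
  · have := integral_mono_on hT.le intervalIntegrable_const hint fun t ht => (hbounds t ht).1
    simp only [intervalIntegral.integral_const, sub_zero, smul_eq_mul] at this
    linarith
  · have := integral_mono_on hT.le hint intervalIntegrable_const fun t ht => (hbounds t ht).2
    simp only [intervalIntegral.integral_const, sub_zero, smul_eq_mul] at this
    linarith
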